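/- Let N : M_d(ℂ) → M_d(ℂ) be a channel with Kraus operators {K_i}. Then the maximum entanglement fidelity O(N) — the supremum over all density matrices ρ on ℂ^d ⊗ ℂ^d of ⟨φ, ((id⊗N)(ρ)) φ⟩ — equals (1/d) times the largest eigenvalue of the Choi matrix J^N, which (since J^N is positive semidefinite) equals (1/d)·‖J^N‖, where ‖·‖ is the spectral (operator) norm. Moreover this supremum is attained. -/

import Mathlib

open Matrix
open scoped Kronecker ComplexOrder

/-- The maximally entangled unit vector `φ = (1/√d) Σ_a e_a ⊗ e_a`. -/
noncomputable def maxEnt (n : Type*) [Fintype n] [DecidableEq n] : n × n → ℂ :=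
  fun p => if p.1 = p.2 then ((1 / Real.sqrt (Fintype.card n) : ℝ) : ℂ) else 0

/-- The output `(id ⊗ N)(ρ) = Σ_i (I ⊗ K_i) ρ (I ⊗ K_i)†` of one half of `ρ`
through the channel with Kraus operators `K`. -/
noncomputable def chanOut {n : Type*} [Fintype n] [DecidableEq n] {ι : Type*} [Fintype ι]
    (K : ι → Matrix n n ℂ) (ρ : Matrix (n × n) (n × n) ℂ) : Matrix (n × n) (n × n) ℂ :=
  ∑ i, ((1 : Matrix n n ℂ) ⊗ₖ K i) * ρ * ((1 : Matrix n n ℂ) ⊗ₖ K i)ᴴ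

/-- The entanglement fidelity `⟨φ, ((id⊗N)(ρ)) φ⟩`. -/
noncomputable def fid {n : Type*} [Fintype n] [DecidableEq n] {ι : Type*} [Fintype ι]
    (K : ι → Matrix n n ℂ) (ρ : Matrix (n × n) (n × n) ℂ) : ℂ :=
  star (maxEnt n) ⬝ᵥ (chanOut K ρ *ᵥ maxEnt n)

/-- A density matrix: positive semidefinite with unit trace. -/
def IsDensity {m : Type*} [Fintype m] (ρ : Matrix m m ℂ) : Prop :=
  ρ.PosSemidef ∧ ρ.trace = 1

/-- The set of (real) entanglement fidelity values achievable with density-matrix inputs. -/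
noncomputable def fidSet {n : Type*} [Fintype n] [DecidableEq n] {ι : Type*} [Fintype ι]
    (K : ι → Matrix n n ℂ) : Set ℝ :=
  {x : ℝ | ∃ ρ : Matrix (n × n) (n × n) ℂ, IsDensity ρ ∧ fid K ρ = (x : ℂ)}

/-- The Choi matrix `J^N = Σ_{j,k} E_{jk} ⊗ N(E_{jk})` of the channel with Kraus
operators `K`. -/
noncomputable def choi {n m : Type*} [Fintype n] [DecidableEq n] [Fintype m] {ι : Type*}
    [Fintype ι] (K : ι → Matrix m n ℂ) : Matrix (n × m) (n × m) ℂ :=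
  Matrix.of fun p q => (∑ i, K i * Matrix.single p.1 q.1 (1 : ℂ) * (K i)ᴴ) p.2 q.2

/-! The fidelity is linear in the input: writing `ρ'` for `ρ` with its tensor factors swapped
and transposed, `⟨φ, (id ⊗ N)(ρ) φ⟩ = tr (J^N ρ') / d`, and `ρ ↦ ρ'` is a bijection of
density matrices. Over density matrices, `tr (J ρ')` is at most `‖J‖` because `J ≤ ‖J‖ • 1`,
and since `J` is positive semidefinite, `‖J‖` is its largest eigenvalue; the projection onto a
corresponding unit eigenvector attains the bound. -/

open Matrix

namespace Matrix

variable {n : Type*} [Fintype n] [DecidableEq n]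

open scoped Matrix.Norms.L2Operator MatrixOrder in
theorem IsHermitian.isGreatest_range_eigenvalues [Nonempty n] {A : Matrix n n ℂ}
    (hA : A.IsHermitian) (hA₀ : A.PosSemidef) :
    IsGreatest (Set.range hA.eigenvalues) ‖toEuclideanCLM (𝕜 := ℂ) A‖ := by
  rw [← hA.spectrum_real_eq_range_eigenvalues, ← cstar_norm_def]
  exact ⟨CStarAlgebra.norm_mem_spectrum_of_nonneg (nonneg_iff_posSemidef.mpr hA₀),
    fun r hr => (Real.le_norm_self r).trans (spectrum.norm_le_norm_of_mem hr)⟩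

theorem IsHermitian.iSup_eigenvalues_eq_norm [Nonempty n] {A : Matrix n n ℂ}
    (hA : A.IsHermitian) (hA₀ : A.PosSemidef) :
    ⨆ i, hA.eigenvalues i = ‖toEuclideanCLM (𝕜 := ℂ) A‖ :=
  (hA.isGreatest_range_eigenvalues hA₀).csSup_eq

open scoped Matrix.Norms.L2Operator MatrixOrder ComplexOrder in
theorem IsHermitian.trace_mul_le_norm_mul_trace {A ρ : Matrix n n ℂ} (hA : A.IsHermitian)
    (hρ : ρ.PosSemidef) : (A * ρ).trace ≤ ‖toEuclideanCLM (𝕜 := ℂ) A‖ * ρ.trace := by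
  set s := CFC.sqrt ρ
  have hs : IsSelfAdjoint s := (CFC.sqrt_nonneg ρ).isSelfAdjoint
  have hρs : s * s = ρ := CFC.sqrt_mul_sqrt_self ρ (nonneg_iff_posSemidef.mpr hρ)
  have hle : s * A * s ≤ s * algebraMap ℝ _ ‖A‖ * s :=
    hs.conjugate_le_conjugate (IsSelfAdjoint.le_algebraMap_norm_self hA.isSelfAdjoint)
  have htr := (le_iff.mp hle).trace_nonneg
  rw [trace_sub, sub_nonneg] at htr
  convert htr using 1
  · rw [← hρs, ← mul_assoc, trace_mul_comm, mul_assoc]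
  · rw [← hρs, Algebra.algebraMap_eq_smul_one, mul_smul_comm, smul_mul_assoc, mul_one, trace_smul]
    simp [cstar_norm_def]

theorem IsHermitian.exists_isDensity_trace_mul_eq {A : Matrix n n ℂ} (hA : A.IsHermitian)
    (j : n) : ∃ ρ : Matrix n n ℂ, IsDensity ρ ∧ (A * ρ).trace = hA.eigenvalues j := by
  set v : n → ℂ := ⇑(hA.eigenvectorBasis j)
  have hv : v ⬝ᵥ star v = 1 := by
    rw [← EuclideanSpace.inner_eq_star_dotProduct, inner_self_eq_norm_sq_to_K,
      hA.eigenvectorBasis.orthonormal.1 j]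
    simp
  refine ⟨vecMulVec v (star v), ⟨posSemidef_vecMulVec_self_star v, by rw [trace_vecMulVec, hv]⟩, ?_⟩
  rw [mul_vecMulVec, trace_vecMulVec, hA.mulVec_eigenvectorBasis, smul_dotProduct, hv]
  simp

end Matrix

section SwapTranspose

variable {n m R : Type*}

def swapTranspose (ρ : Matrix (n × m) (n × m) R) : Matrix (m × n) (m × n) R :=
  (ρ.submatrix Prod.swap Prod.swap)ᵀ

theorem swapTranspose_swapTranspose (ρ : Matrix (n × m) (n × m) R) :
    swapTranspose (swapTranspose ρ) = ρ :=
  rfl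

variable [Fintype n] [Fintype m]

theorem trace_swapTranspose [AddCommMonoid R] (ρ : Matrix (n × m) (n × m) R) :
    (swapTranspose ρ).trace = ρ.trace :=
  (trace_transpose _).trans <| Fintype.sum_equiv (Equiv.prodComm m n) _ _ fun _ => rfl

theorem IsDensity.swapTranspose {ρ : Matrix (n × m) (n × m) ℂ} (hρ : IsDensity ρ) :
    IsDensity (swapTranspose ρ) :=
  ⟨(hρ.1.submatrix Prod.swap).transpose, (trace_swapTranspose ρ).trans hρ.2⟩

end SwapTranspose

section Channel

variable {n m ι : Type*} [Fintype n] [DecidableEq n] [Fintype m] [Fintype ι]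

theorem star_maxEnt_dotProduct_mulVec (M : Matrix (n × n) (n × n) ℂ) :
    star (maxEnt n) ⬝ᵥ (M *ᵥ maxEnt n) = (∑ a, ∑ b, M (a, a) (b, b)) / Fintype.card n := by
  set c : ℂ := ((1 / Real.sqrt (Fintype.card n) : ℝ) : ℂ)
  have hc : c * c = 1 / Fintype.card n := by
    rw [← Complex.ofReal_mul, one_div_mul_one_div, Real.mul_self_sqrt (Nat.cast_nonneg _)]
    push_cast; rfl
  have hmul : ∀ p, (M *ᵥ maxEnt n) p = c * ∑ b, M p (b, b) := by
    intro p
    simp [mulVec, dotProduct, maxEnt, Fintype.sum_prod_type, Finset.mul_sum, mul_comm, c]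
  simp only [dotProduct, hmul, Fintype.sum_prod_type, maxEnt, Pi.star_apply, apply_ite star,
    star_zero, Complex.star_def, Complex.conj_ofReal, ite_mul, zero_mul, Finset.sum_ite_eq,
    Finset.mem_univ, if_true, ← mul_assoc]
  change ∑ a, c * c * _ = _
  simp only [hc, one_div_mul_eq_div, Finset.sum_div]

theorem chanOut_apply_diag (K : ι → Matrix n n ℂ) (ρ : Matrix (n × n) (n × n) ℂ) (a b : n) :
    chanOut K ρ (a, a) (b, b) = ∑ i, ∑ e, ∑ c, K i a c * ρ (a, c) (b, e) * star (K i b e) := by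
  simp only [chanOut, Matrix.sum_apply, mul_apply, conjTranspose_apply, kroneckerMap_apply,
    one_apply, Fintype.sum_prod_type, ite_mul, one_mul, zero_mul, mul_ite, mul_zero,
    Finset.sum_ite_eq, Finset.mem_univ, if_true, apply_ite star, star_zero, Finset.sum_ite_irrel,
    Finset.sum_const_zero, Finset.sum_mul]

theorem choi_apply (K : ι → Matrix m n ℂ) (p q : n × m) :
    choi K p q = ∑ i, K i p.2 p.1 * star (K i q.2 q.1) := by
  simp only [choi, of_apply, Matrix.sum_apply, mul_apply, conjTranspose_apply, single, mul_ite,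
    mul_one, mul_zero, ite_mul, zero_mul, Finset.sum_ite_eq, Finset.mem_univ, if_true, ite_and]

theorem choi_posSemidef (K : ι → Matrix m n ℂ) : (choi K).PosSemidef := by
  have : choi K = ∑ i, vecMulVec (fun p : n × m => K i p.2 p.1) (star fun p => K i p.2 p.1) := by
    ext p q
    simp [choi_apply, Matrix.sum_apply, vecMulVec_apply]
  rw [this]
  exact posSemidef_sum _ fun i _ => posSemidef_vecMulVec_self_star _

theorem fid_eq_trace_choi_mul (K : ι → Matrix n n ℂ) (ρ : Matrix (n × n) (n × n) ℂ) :
    fid K ρ = (choi K * swapTranspose ρ).trace / Fintype.card n := by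
  rw [fid, star_maxEnt_dotProduct_mulVec]
  congr 1
  simp only [chanOut_apply_diag, trace, diag, mul_apply, swapTranspose, transpose_apply,
    submatrix_apply, choi_apply, Fintype.sum_prod_type_right, Finset.sum_mul, Prod.swap_prod_mk]
  refine Finset.sum_congr rfl fun a _ => ?_
  conv_rhs => rw [Finset.sum_comm]
  refine Finset.sum_congr rfl fun b _ => ?_
  rw [Finset.sum_comm_cycle]
  refine Finset.sum_congr rfl fun c _ => ?_
  rw [Finset.sum_comm]
  exact Finset.sum_congr rfl fun e _ => Finset.sum_congr rfl fun i _ => mul_right_comm _ _ _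

end Channel

theorem stmt_2 {d : ℕ} [NeZero d] {ι : Type*} [Fintype ι]
    (K : ι → Matrix (Fin d) (Fin d) ℂ)
    (hJ : (choi K).IsHermitian) :
    IsGreatest (fidSet K) ((⨆ p, hJ.eigenvalues p) / d) ∧
      (⨆ p, hJ.eigenvalues p) / d = ‖Matrix.toEuclideanCLM (𝕜 := ℂ) (choi K)‖ / d := by
  have hJ₀ := choi_posSemidef K
  have hd : (d : ℂ) ≠ 0 := Nat.cast_ne_zero.mpr (NeZero.ne d)
  rw [hJ.iSup_eigenvalues_eq_norm hJ₀]
  refine ⟨⟨?_, ?_⟩, rfl⟩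
  · obtain ⟨j, hj⟩ := (hJ.isGreatest_range_eigenvalues hJ₀).1
    obtain ⟨τ, hτ, htr⟩ := hJ.exists_isDensity_trace_mul_eq j
    refine ⟨swapTranspose τ, hτ.swapTranspose, ?_⟩
    rw [fid_eq_trace_choi_mul, swapTranspose_swapTranspose, htr, hj, Fintype.card_fin]
    push_cast; rfl
  · rintro x ⟨ρ, hρ, hx⟩
    have hle := hJ.trace_mul_le_norm_mul_trace hρ.swapTranspose.1
    rw [hρ.swapTranspose.2, mul_one] at hle
    rw [fid_eq_trace_choi_mul, Fintype.card_fin, div_eq_iff hd] at hx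
    rw [hx, ← Complex.ofReal_natCast, ← Complex.ofReal_mul, Complex.real_le_real] at hle
    exact (le_div_iff₀ (Nat.cast_pos.mpr (NeZero.pos d))).mpr hle
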